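/- arXiv:2503.21619 — 2 statements merged into one kernel-verified Lean document; each statement's English description precedes it below -/
import Mathlib

section
/- The group F₂ × F₂ × F₂ (direct product of three free groups of rank 2) is not purely permutation field: there is no sequence of homomorphisms φ_i : F₂×F₂×F₂ → S_{n_i} with n_i such that std∘φ_i strongly converges to the left regular representation. -/
noncomputable section
open scoped ENNReal

variable {α β : Type*} {E : Type*} [NormedAddCommGroup E] {p : ℝ≥0∞}

theorem Memℓp.comp_equiv {f : β → E} (hf : Memℓp f p) (e : α ≃ β) :
    Memℓp (f ∘ e) p := by
  rcases p.trichotomy with (rfl | rfl | hp)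
  · exact memℓp_zero ((memℓp_zero_iff.1 hf).preimage (e.injective.injOn))
  · obtain ⟨C, hC⟩ := memℓp_infty_iff.1 hf
    refine memℓp_infty ⟨C, ?_⟩
    rintro x ⟨a, rfl⟩
    exact hC ⟨e a, rfl⟩
  · refine memℓp_gen ?_
    exact (e.summable_iff (f := fun i => ‖f i‖ ^ p.toReal)).2
      ((memℓp_gen_iff (by positivity)).1 hf)

/-- ℓ²(α) with complex coefficients. -/
abbrev ellTwo (α : Type*) := lp (fun _ : α => ℂ) 2

/-- transport of ℓ² under an equiv of index types -/
def ellTwoCongr (e : α ≃ β) : ellTwo α ≃ₗᵢ[ℂ] ellTwo β where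
  toFun f := ⟨(f : α → ℂ) ∘ e.symm, (lp.memℓp f).comp_equiv e.symm⟩
  invFun f := ⟨(f : β → ℂ) ∘ e, (lp.memℓp f).comp_equiv e⟩
  left_inv f := by ext x; simp
  right_inv f := by ext x; simp
  map_add' f g := by ext x; simp [lp.coeFn_add]; rfl
  map_smul' c f := by ext x; simp [lp.coeFn_smul]
  norm_map' f := by
    rw [lp.norm_eq_tsum_rpow (by norm_num) , lp.norm_eq_tsum_rpow (by norm_num)]
    congr 1
    exact e.symm.tsum_eq (fun a => ‖(f : α → ℂ) a‖ ^ (2 : ℝ≥0∞).toReal)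

end

noncomputable section
@[simp] theorem ellTwoCongr_apply (e : α ≃ β) (f : ellTwo α) (x : β) :
    (ellTwoCongr e f : β → ℂ) x = (f : α → ℂ) (e.symm x) := rfl

/-- The left regular representation of a group on ℓ²(G), as a monoid hom to bounded operators. -/
def leftRegularRep (G : Type*) [Group G] : G →* (ellTwo G →L[ℂ] ellTwo G) where
  toFun g := ((ellTwoCongr (Equiv.mulLeft g)).toContinuousLinearEquiv :
      ellTwo G →L[ℂ] ellTwo G)
  map_one' := by
    ext f x
    simp [Equiv.Perm.one_symm]
  map_mul' a b := by
    ext f x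
    simp [Equiv.Perm.mul_def, mul_assoc]

/-- The extension of the left regular representation to the group algebra ℂ[G]. -/
def leftRegularAlg (G : Type*) [Group G] :
    MonoidAlgebra ℂ G →ₐ[ℂ] (ellTwo G →L[ℂ] ellTwo G) :=
  MonoidAlgebra.lift ℂ _ G (leftRegularRep G)
end

noncomputable section

/-- The `n`-dimensional permutation (defining) representation of `S_n` on `ℂⁿ`,
as a homomorphism to bounded operators on Euclidean space. -/
def permRepCLM (n : ℕ) :
    Equiv.Perm (Fin n) →* (EuclideanSpace ℂ (Fin n) →L[ℂ] EuclideanSpace ℂ (Fin n)) where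
  toFun σ := ((LinearIsometryEquiv.piLpCongrLeft 2 ℂ ℂ σ).toContinuousLinearEquiv :
      EuclideanSpace ℂ (Fin n) →L[ℂ] EuclideanSpace ℂ (Fin n))
  map_one' := by
    ext v x
    simp [LinearIsometryEquiv.piLpCongrLeft_apply, Equiv.piCongrLeft', Equiv.Perm.one_symm]
  map_mul' σ τ := by
    ext v x
    simp [LinearIsometryEquiv.piLpCongrLeft_apply, Equiv.piCongrLeft', Equiv.Perm.mul_def]

end

noncomputable section
open Filter

/-- The mean-zero subspace of `ℂⁿ`: the orthogonal complement of constants, carrying the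
`(n-1)`-dimensional standard representation of `S_n`. -/
def meanZero (n : ℕ) : Submodule ℂ (EuclideanSpace ℂ (Fin n)) where
  carrier := {v | ∑ i, v i = 0}
  add_mem' := by
    intro a b ha hb
    simp only [Set.mem_setOf_eq, PiLp.add_apply, Finset.sum_add_distrib] at *
    rw [ha, hb, add_zero]
  zero_mem' := by simp
  smul_mem' := by
    intro c v hv
    simp only [Set.mem_setOf_eq, PiLp.smul_apply, ← Finset.mul_sum, smul_eq_mul] at *
    rw [hv, mul_zero]

/-- The extension to the group algebra `ℂ[Γ]` of the representation `std ∘ φ`, where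
`φ : Γ → S_n` and `std` is the standard `(n-1)`-dimensional subrepresentation of the defining
representation of `S_n` (realized on the invariant subspace `meanZero n` by compressing). -/
def stdAlg {Γ : Type*} [Group Γ] (n : ℕ) (φ : Γ →* Equiv.Perm (Fin n))
    (z : MonoidAlgebra ℂ Γ) : meanZero n →L[ℂ] meanZero n :=
  (meanZero n).orthogonalProjectionOnto.comp
    ((MonoidAlgebra.lift ℂ _ Γ ((permRepCLM n).comp φ) z).comp (meanZero n).subtypeL)

/-- The free group on two generators. -/
abbrev F₂ := FreeGroup (Fin 2)

/-!
Five conjugates `t_j = x^j y x^{-j}` of a generator of `F₂` play ping-pong on `F₂` (through the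
action of `F₂` on slopes of `ℝ²` by shears), and splitting `⟪λ(t_j) f, f'⟫` along the ping-pong
sets with Cauchy–Schwarz gives the Haagerup-type bound `‖∑ⱼ λ(t_j)‖ ≤ 2√5 < 5`. Placing the `t_j`
in the second (resp. third) factor of `Γ = F₂ × F₂ × F₂`, strong convergence forces
`‖std(φᵢ(∑ⱼ t_j))‖ < 5` eventually. If that factor did not act transitively on `{1, …, nᵢ}`, an
orbit would give a nonzero mean-zero vector fixed by it, on which `∑ⱼ std(φᵢ(t_j))` acts as `5`;
so eventually both factors act transitively. The centralizer of a transitive permutation group acts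
freely, so the image of the first factor, which commutes with both transitive images, lies in the
third one and is therefore abelian. Hence the commutator `c` of the generators of the first factor
satisfies `std(φᵢ(1 - c)) = 0` eventually, although `λ(1 - c) ≠ 0`.
-/

open Function Topology Equiv MulAction
open scoped commutatorElement

section IndicatorL2

variable {α : Type*}

def indicatorL2 (S : Set α) (f : ellTwo α) : ellTwo α :=
  ⟨S.indicator f, (lp.memℓp f).mono' fun _ => norm_indicator_le_norm_self _ _⟩

theorem indicatorL2_apply (S : Set α) (f : ellTwo α) (x : α) :
    indicatorL2 S f x = S.indicator f x := rfl

theorem norm_indicatorL2_le (S : Set α) (f : ellTwo α) : ‖indicatorL2 S f‖ ≤ ‖f‖ :=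
  lp.norm_mono two_ne_zero fun _ => norm_indicator_le_norm_self _ _

theorem hasSum_norm_sq_ellTwo (f : ellTwo α) : HasSum (fun x => ‖f x‖ ^ 2) (‖f‖ ^ 2) := by
  simpa using lp.hasSum_norm (p := 2) (by norm_num) f

theorem sum_norm_indicatorL2_sq_le {ι : Type*} [Fintype ι] {S : ι → Set α}
    (hS : Pairwise (Disjoint on S)) (f : ellTwo α) :
    ∑ j, ‖indicatorL2 (S j) f‖ ^ 2 ≤ ‖f‖ ^ 2 := by
  classical
  refine hasSum_le (fun x => ?_) (hasSum_sum fun j _ => hasSum_norm_sq_ellTwo _)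
    (hasSum_norm_sq_ellTwo f)
  have hsq (j : ι) :
      ‖indicatorL2 (S j) f x‖ ^ 2 = (S j).indicator (fun y => ‖f y‖ ^ 2) x := by
    by_cases hx : x ∈ S j <;> simp [indicatorL2_apply, hx]
  simp only [hsq]
  rw [← Finset.indicator_biUnion_apply _ _ (hS.set_pairwise _)]
  exact Set.indicator_le_self' (fun _ _ => by positivity) x

theorem sum_norm_indicatorL2_le {ι : Type*} [Fintype ι] {S : ι → Set α}
    (hS : Pairwise (Disjoint on S)) (f : ellTwo α) :
    ∑ j, ‖indicatorL2 (S j) f‖ ≤ √(Fintype.card ι) * ‖f‖ := by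
  refine (pow_le_pow_iff_left₀ (by positivity) (by positivity) two_ne_zero).1 ?_
  calc (∑ j, ‖indicatorL2 (S j) f‖) ^ 2
      ≤ Fintype.card ι * ∑ j, ‖indicatorL2 (S j) f‖ ^ 2 := sq_sum_le_card_mul_sum_sq
    _ ≤ Fintype.card ι * ‖f‖ ^ 2 := by gcongr; exact sum_norm_indicatorL2_sq_le hS f
    _ = (√(Fintype.card ι) * ‖f‖) ^ 2 := by rw [mul_pow, Real.sq_sqrt (by positivity)]

end IndicatorL2

section LeftRegular

variable {G : Type*} [Group G]

theorem leftRegularRep_apply (g : G) (f : ellTwo G) (x : G) :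
    leftRegularRep G g f x = f (g⁻¹ * x) := rfl

theorem norm_leftRegularRep_apply (g : G) (f : ellTwo G) : ‖leftRegularRep G g f‖ = ‖f‖ :=
  (ellTwoCongr (Equiv.mulLeft g)).norm_map f

theorem inner_leftRegularRep_left (g : G) (f f' : ellTwo G) :
    inner ℂ (leftRegularRep G g f) f' = inner ℂ f (leftRegularRep G g⁻¹ f') := by
  calc inner ℂ (leftRegularRep G g f) f'
      = inner ℂ (leftRegularRep G g f) (leftRegularRep G g (leftRegularRep G g⁻¹ f')) := by
        rw [← mul_apply_eq_comp, ← map_mul, mul_inv_cancel, map_one, one_apply_eq_self]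
    _ = inner ℂ f (leftRegularRep G g⁻¹ f') :=
        (ellTwoCongr (Equiv.mulLeft g)).inner_map_map _ _

theorem leftRegularRep_injective : Injective (leftRegularRep G) := by
  classical
  refine (injective_iff_map_eq_one _).2 fun g hg => ?_
  have := congrArg (fun T => T (lp.single 2 1 1) g) hg
  simpa [leftRegularRep_apply, lp.single_apply, Pi.single_apply, eq_comm] using this

theorem leftRegularAlg_one_sub_of_ne_zero {g : G} (hg : g ≠ 1) :
    leftRegularAlg G (1 - MonoidAlgebra.of ℂ G g) ≠ 0 := by
  rw [map_sub, map_one, leftRegularAlg, MonoidAlgebra.lift_of, sub_ne_zero, ne_comm,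
    ← map_one (leftRegularRep G), leftRegularRep_injective.ne_iff]
  exact hg

theorem leftRegularAlg_sum_of {ι : Type*} [Fintype ι] (t : ι → G) :
    leftRegularAlg G (∑ j, MonoidAlgebra.of ℂ G (t j)) = ∑ j, leftRegularRep G (t j) := by
  simp [leftRegularAlg]

theorem norm_inner_leftRegularRep_le {t : G} {S : Set G} (hS : ∀ u ∉ S, t * u ∈ S)
    (f f' : ellTwo G) :
    ‖inner ℂ (leftRegularRep G t f) f'‖ ≤
      ‖indicatorL2 S f‖ * ‖f'‖ + ‖f‖ * ‖indicatorL2 S f'‖ := by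
  have hsplit : inner ℂ (leftRegularRep G t f) f' =
      inner ℂ (indicatorL2 S f) (leftRegularRep G t⁻¹ f') +
        inner ℂ (indicatorL2 Sᶜ f) (leftRegularRep G t⁻¹ (indicatorL2 S f')) := by
    rw [inner_leftRegularRep_left, lp.inner_eq_tsum, lp.inner_eq_tsum, lp.inner_eq_tsum,
      ← (lp.summable_inner _ _).tsum_add (lp.summable_inner _ _)]
    refine tsum_congr fun u => ?_
    by_cases hu : u ∈ S <;> simp [indicatorL2_apply, leftRegularRep_apply, hu, hS u]
  calc ‖inner ℂ (leftRegularRep G t f) f'‖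
      ≤ ‖indicatorL2 S f‖ * ‖leftRegularRep G t⁻¹ f'‖ +
          ‖indicatorL2 Sᶜ f‖ * ‖leftRegularRep G t⁻¹ (indicatorL2 S f')‖ := by
        rw [hsplit]
        exact (norm_add_le _ _).trans
          (add_le_add (norm_inner_le_norm _ _) (norm_inner_le_norm _ _))
    _ ≤ ‖indicatorL2 S f‖ * ‖f'‖ + ‖f‖ * ‖indicatorL2 S f'‖ := by
        rw [norm_leftRegularRep_apply, norm_leftRegularRep_apply]
        gcongr
        exact norm_indicatorL2_le _ _

structure IsPingPong {ι : Type*} (t : ι → G) (S : ι → Set G) : Prop where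
  pairwise_disjoint : Pairwise (Disjoint on S)
  mul_mem : ∀ j, ∀ u ∉ S j, t j * u ∈ S j

theorem IsPingPong.comap {H : Type*} [Group H] {ι : Type*} {t : ι → H} {S : ι → Set H}
    (h : IsPingPong t S) (π : G →* H) {s : ι → G} (hs : ∀ j, π (s j) = t j) :
    IsPingPong s fun j => π ⁻¹' S j where
  pairwise_disjoint _ _ hij := (h.pairwise_disjoint hij).preimage π
  mul_mem j u hu := by simpa [hs] using h.mul_mem j (π u) hu

theorem IsPingPong.norm_sum_leftRegularRep_le {ι : Type*} [Fintype ι] {t : ι → G}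
    {S : ι → Set G} (h : IsPingPong t S) :
    ‖∑ j, leftRegularRep G (t j)‖ ≤ 2 * √(Fintype.card ι) := by
  refine ContinuousLinearMap.opNorm_le_of_re_inner_le (by positivity) fun f f' hf hf' => ?_
  calc RCLike.re (inner ℂ ((∑ j, leftRegularRep G (t j)) f) f')
      ≤ ‖inner ℂ ((∑ j, leftRegularRep G (t j)) f) f'‖ := RCLike.re_le_norm _
    _ ≤ ∑ j, ‖inner ℂ (leftRegularRep G (t j) f) f'‖ := by
        rw [sum_apply, sum_inner]
        exact norm_sum_le _ _
    _ ≤ ∑ j, (‖indicatorL2 (S j) f‖ + ‖indicatorL2 (S j) f'‖) := by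
        gcongr with j
        simpa [hf, hf'] using norm_inner_leftRegularRep_le (h.mul_mem j) f f'
    _ ≤ √(Fintype.card ι) * ‖f‖ + √(Fintype.card ι) * ‖f'‖ := by
        rw [Finset.sum_add_distrib]
        exact add_le_add (sum_norm_indicatorL2_le h.pairwise_disjoint f)
          (sum_norm_indicatorL2_le h.pairwise_disjoint f')
    _ = 2 * √(Fintype.card ι) := by rw [hf, hf']; ring

end LeftRegular

section Shears

def shearFst (c : ℝ) : (ℝ × ℝ) ≃ₗ[ℝ] ℝ × ℝ where
  toFun v := (v.1 + c * v.2, v.2)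
  invFun v := (v.1 - c * v.2, v.2)
  map_add' u v := by ext <;> simp; ring
  map_smul' a v := by ext <;> simp; ring
  left_inv v := by simp
  right_inv v := by simp

def shearSnd (c : ℝ) : (ℝ × ℝ) ≃ₗ[ℝ] ℝ × ℝ where
  toFun v := (v.1, v.2 + c * v.1)
  invFun v := (v.1, v.2 - c * v.1)
  map_add' u v := by ext <;> simp; ring
  map_smul' a v := by ext <;> simp; ring
  left_inv v := by simp
  right_inv v := by simp

theorem shearFst_apply (c : ℝ) (v : ℝ × ℝ) : shearFst c v = (v.1 + c * v.2, v.2) := rfl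

theorem shearSnd_apply (c : ℝ) (v : ℝ × ℝ) : shearSnd c v = (v.1, v.2 + c * v.1) := rfl

theorem shearFst_pow (c : ℝ) (k : ℕ) : shearFst c ^ k = shearFst (k * c) := by
  induction k with
  | zero => ext v <;> simp [shearFst_apply]
  | succ k ih => ext v <;> simp [pow_succ, ih, LinearEquiv.mul_apply, shearFst_apply]; ring

theorem shearFst_inv (c : ℝ) : (shearFst c)⁻¹ = shearFst (-c) := by
  rw [inv_eq_iff_mul_eq_one]
  ext v <;> simp [LinearEquiv.mul_apply, shearFst_apply]

/-- The vectors whose slope `v.1 / v.2` lies within distance `1` of `c`. -/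
def slopeBall (c : ℝ) : Set (ℝ × ℝ) := {v | |v.1 - c * v.2| < |v.2|}

theorem disjoint_slopeBall {c c' : ℝ} (h : 2 ≤ |c - c'|) :
    Disjoint (slopeBall c) (slopeBall c') := by
  refine Set.disjoint_left.2 fun v hv hv' => ?_
  simp only [slopeBall, Set.mem_ofPred_eq] at hv hv'
  have : |c - c'| * |v.2| < 2 * |v.2| := by
    rw [← abs_mul]
    calc |(c - c') * v.2| = |(v.1 - c' * v.2) - (v.1 - c * v.2)| := by ring_nf
      _ ≤ |v.1 - c' * v.2| + |v.1 - c * v.2| := abs_sub _ _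
      _ < 2 * |v.2| := by linarith
  nlinarith [abs_nonneg v.2]

theorem conj_shearSnd_mem_slopeBall (c : ℝ) {v : ℝ × ℝ} (hv : v ≠ 0) (hc : v ∉ slopeBall c) :
    (shearFst c * shearSnd 3 * shearFst (-c)) v ∈ slopeBall c := by
  obtain ⟨x, y⟩ := v
  simp only [slopeBall, Set.mem_ofPred_eq, not_lt, LinearEquiv.mul_apply, shearFst_apply,
    shearSnd_apply, add_sub_cancel_right, neg_mul, ← sub_eq_add_neg] at hc ⊢
  have hw : x - c * y ≠ 0 := by
    intro hw
    have hy : y = 0 := abs_nonpos_iff.1 (by simpa [hw] using hc)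
    exact hv (Prod.ext (by simpa [hy] using hw) hy)
  have h3 : |3 * (x - c * y)| ≤ |y + 3 * (x - c * y)| + |y| := by
    simpa using abs_sub (y + 3 * (x - c * y)) y
  rw [abs_mul, abs_of_pos three_pos] at h3
  linarith [abs_pos.2 hw]

end Shears

section FreeGroupPingPong

def shearRep : F₂ →* ((ℝ × ℝ) ≃ₗ[ℝ] ℝ × ℝ) := FreeGroup.lift ![shearFst 2, shearSnd 3]

def pingPongElt (j : Fin 5) : F₂ :=
  FreeGroup.of 0 ^ j.val * FreeGroup.of 1 * (FreeGroup.of 0 ^ j.val)⁻¹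

def pingPongSet (j : Fin 5) : Set F₂ := (fun w => shearRep w (1, 0)) ⁻¹' slopeBall (2 * j)

theorem shearRep_pingPongElt (j : Fin 5) :
    shearRep (pingPongElt j) = shearFst (2 * j) * shearSnd 3 * shearFst (-(2 * j)) := by
  simp [pingPongElt, shearRep, shearFst_pow, shearFst_inv, mul_comm]

theorem two_le_abs_two_mul_sub {i j : ℕ} (hij : i ≠ j) : 2 ≤ |2 * (i : ℝ) - 2 * j| := by
  have : (1 : ℝ) ≤ |(i : ℝ) - j| := by
    exact_mod_cast Int.one_le_abs (sub_ne_zero.2 (Nat.cast_injective.ne hij))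
  rw [← mul_sub, abs_mul, abs_two]
  linarith

theorem isPingPong_pingPongElt : IsPingPong pingPongElt pingPongSet where
  pairwise_disjoint _ _ hij :=
    (disjoint_slopeBall (two_le_abs_two_mul_sub (Fin.val_ne_of_ne hij))).preimage _
  mul_mem j u hu := by
    rw [pingPongSet, Set.mem_preimage, map_mul, LinearEquiv.mul_apply, shearRep_pingPongElt]
    exact conj_shearSnd_mem_slopeBall _ ((shearRep u).map_ne_zero_iff.2 (by simp)) hu

theorem norm_leftRegularAlg_sum_lt_five {G : Type*} [Group G] (π : G →* F₂) {s : Fin 5 → G}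
    (hs : ∀ j, π (s j) = pingPongElt j) :
    ‖leftRegularAlg G (∑ j, MonoidAlgebra.of ℂ G (s j))‖ < 5 := by
  rw [leftRegularAlg_sum_of]
  calc _ ≤ 2 * √(Fintype.card (Fin 5)) :=
        (isPingPong_pingPongElt.comap π hs).norm_sum_leftRegularRep_le
    _ < 5 := by
        rw [Fintype.card_fin, Nat.cast_ofNat, ← lt_div_iff₀' two_pos, Real.sqrt_lt' (by norm_num)]
        norm_num

end FreeGroupPingPong

section StandardRepresentation

variable {n : ℕ}

theorem permRepCLM_apply (σ : Perm (Fin n)) (v : EuclideanSpace ℂ (Fin n)) (x : Fin n) :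
    permRepCLM n σ v x = v (σ⁻¹ x) := rfl

theorem stdAlg_one_sub_of_eq_one {Γ : Type*} [Group Γ] (φ : Γ →* Perm (Fin n)) {g : Γ}
    (hg : φ g = 1) : stdAlg n φ (1 - MonoidAlgebra.of ℂ Γ g) = 0 := by
  simp [stdAlg, hg]

theorem exists_ne_zero_mem_meanZero_fixed {K : Subgroup (Perm (Fin n))}
    (hK : ¬ IsPretransitive K (Fin n)) :
    ∃ v ∈ meanZero n, v ≠ 0 ∧ ∀ σ ∈ K, permRepCLM n σ v = v := by
  classical
  obtain ⟨p, q, hq⟩ : ∃ p q : Fin n, q ∉ orbit K p := by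
    by_contra! h
    exact hK ⟨fun p q => h p q⟩
  set O : Finset (Fin n) := {x | x ∈ orbit K p}
  refine ⟨WithLp.toLp 2 fun x => if x ∈ orbit K p then (Oᶜ.card : ℂ) else -O.card, ?_, ?_, ?_⟩
  · show ∑ x, _ = 0
    simp only [Finset.compl_filter, Finset.filter_not, Finset.sum_ite, Finset.sum_const,
      nsmul_eq_mul, O]
    ring
  · intro hv
    have hp := congrArg (· p) hv
    have hqO : q ∈ Oᶜ := by simpa [O] using hq
    simp only [mem_orbit_self, if_true, PiLp.zero_apply, Nat.cast_eq_zero,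
      Finset.card_eq_zero] at hp
    simp [hp] at hqO
  · intro σ hσ
    ext x
    have hmem : σ⁻¹ x ∈ orbit K p ↔ x ∈ orbit K p := by
      rw [← orbit_eq_iff, ← orbit_eq_iff, ← orbit_smul (⟨σ, hσ⟩⁻¹ : K) x]
      rfl
    rw [permRepCLM_apply]
    simp only [hmem]

theorem le_norm_stdAlg_sum_of_fixed {Γ : Type*} [Group Γ] (φ : Γ →* Perm (Fin n)) {ι : Type*}
    [Fintype ι] (t : ι → Γ) {v : EuclideanSpace ℂ (Fin n)} (hv : v ∈ meanZero n) (hv0 : v ≠ 0)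
    (hfix : ∀ j, permRepCLM n (φ (t j)) v = v) :
    (Fintype.card ι : ℝ) ≤ ‖stdAlg n φ (∑ j, MonoidAlgebra.of ℂ Γ (t j))‖ := by
  have hsum : MonoidAlgebra.lift ℂ _ Γ ((permRepCLM n).comp φ)
      (∑ j, MonoidAlgebra.of ℂ Γ (t j)) v = (Fintype.card ι : ℂ) • v := by
    simp [hfix, Nat.cast_smul_eq_nsmul]
  have hT : stdAlg n φ (∑ j, MonoidAlgebra.of ℂ Γ (t j)) ⟨v, hv⟩ =
      (Fintype.card ι : ℂ) • ⟨v, hv⟩ := by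
    rw [stdAlg, ContinuousLinearMap.comp_apply, ContinuousLinearMap.comp_apply,
      Submodule.subtypeL_apply, hsum, map_smul]
    exact congrArg _ (Submodule.orthogonalProjectionOnto_mem_subspace_eq_self ⟨v, hv⟩)
  have hpos : 0 < ‖(⟨v, hv⟩ : meanZero n)‖ := norm_pos_iff.2 (by simpa using hv0)
  refine le_of_mul_le_mul_right ?_ hpos
  calc (Fintype.card ι : ℝ) * ‖(⟨v, hv⟩ : meanZero n)‖
      = ‖stdAlg n φ (∑ j, MonoidAlgebra.of ℂ Γ (t j)) ⟨v, hv⟩‖ := by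
        rw [hT, norm_smul, Complex.norm_natCast]
    _ ≤ _ := ContinuousLinearMap.le_opNorm _ _

theorem le_norm_stdAlg_sum_of_not_isPretransitive {Γ : Type*} [Group Γ]
    (φ : Γ →* Perm (Fin n)) {K : Subgroup (Perm (Fin n))} (hK : ¬ IsPretransitive K (Fin n))
    {ι : Type*} [Fintype ι] (t : ι → Γ) (ht : ∀ j, φ (t j) ∈ K) :
    (Fintype.card ι : ℝ) ≤ ‖stdAlg n φ (∑ j, MonoidAlgebra.of ℂ Γ (t j))‖ := by
  obtain ⟨v, hv, hv0, hfix⟩ := exists_ne_zero_mem_meanZero_fixed hK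
  exact le_norm_stdAlg_sum_of_fixed φ t hv hv0 fun j => hfix _ (ht j)

end StandardRepresentation

theorem eventually_isPretransitive_of_tendsto {Γ H : Type*} [Group Γ] [Group H] {n : ℕ → ℕ}
    (φ : ∀ i, Γ →* Perm (Fin (n i))) (f : H →* Γ) {ι : Type*} [Fintype ι] (t : ι → H)
    (hlt : ‖leftRegularAlg Γ (∑ j, MonoidAlgebra.of ℂ Γ (f (t j)))‖ < Fintype.card ι)
    (hconv : Tendsto (fun i => ‖stdAlg (n i) (φ i) (∑ j, MonoidAlgebra.of ℂ Γ (f (t j)))‖)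
      atTop (𝓝 ‖leftRegularAlg Γ (∑ j, MonoidAlgebra.of ℂ Γ (f (t j)))‖)) :
    ∀ᶠ i in atTop, IsPretransitive ((φ i).comp f).range (Fin (n i)) := by
  refine (hconv.eventually_lt_const hlt).mono fun i hi => ?_
  by_contra h
  exact (le_norm_stdAlg_sum_of_not_isPretransitive (φ i) h _ fun j => ⟨t j, rfl⟩).not_gt hi

theorem eventually_isPretransitive_of_leftInverse {Γ : Type*} [Group Γ] {n : ℕ → ℕ}
    (φ : ∀ i, Γ →* Perm (Fin (n i))) (f : F₂ →* Γ) (π : Γ →* F₂) (hπ : LeftInverse π f)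
    (hconv : ∀ z, Tendsto (fun i => ‖stdAlg (n i) (φ i) z‖) atTop (𝓝 ‖leftRegularAlg Γ z‖)) :
    ∀ᶠ i in atTop, IsPretransitive ((φ i).comp f).range (Fin (n i)) :=
  eventually_isPretransitive_of_tendsto φ f pingPongElt
    (by simpa using norm_leftRegularAlg_sum_lt_five π fun j => hπ (pingPongElt j)) (hconv _)

section Centralizer

open Subgroup

variable {X : Type*}

theorem eq_one_of_mem_centralizer_of_apply_eq {K : Subgroup (Perm X)} [IsPretransitive K X]
    {σ : Perm X} (hσ : σ ∈ centralizer K) {p : X} (hp : σ p = p) : σ = 1 := by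
  ext q
  obtain ⟨k, rfl⟩ := exists_smul_eq K p q
  have hk : (k : Perm X) * σ = σ * k := mem_centralizer_iff.1 hσ k k.2
  change σ ((k : Perm X) p) = (k : Perm X) p
  rw [← Perm.mul_apply, ← hk, Perm.mul_apply, hp]

theorem centralizer_le_of_isPretransitive {B C : Subgroup (Perm X)} [IsPretransitive B X]
    [IsPretransitive C X] (hCB : C ≤ centralizer B) : centralizer B ≤ C := by
  intro σ hσ
  cases isEmpty_or_nonempty X with
  | inl _ => simp [Subsingleton.elim σ 1]
  | inr hX =>
    obtain ⟨p⟩ := hX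
    obtain ⟨c, hc⟩ := exists_smul_eq C p (σ p)
    have hfix : ((c : Perm X)⁻¹ * σ) p = p := by
      rw [Perm.mul_apply, ← hc]
      exact Perm.inv_eq_iff_eq.2 rfl
    have := eq_one_of_mem_centralizer_of_apply_eq (mul_mem (inv_mem (hCB c.2)) hσ) hfix
    rw [inv_mul_eq_one] at this
    exact this ▸ c.2

theorem commute_of_le_centralizer_of_isPretransitive {A B C : Subgroup (Perm X)}
    [IsPretransitive B X] [IsPretransitive C X] (hCB : C ≤ centralizer B)
    (hAB : A ≤ centralizer B) (hAC : A ≤ centralizer C) {a b : Perm X} (ha : a ∈ A)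
    (hb : b ∈ A) : Commute a b :=
  (mem_centralizer_iff.1 (hAC ha) b (centralizer_le_of_isPretransitive hCB (hAB hb))).symm

theorem MonoidHom.range_le_centralizer_range {H₁ H₂ K : Type*} [Group H₁] [Group H₂] [Group K]
    (f : H₁ →* K) (g : H₂ →* K) (h : ∀ a b, Commute (f a) (g b)) :
    f.range ≤ centralizer g.range := by
  rintro _ ⟨a, rfl⟩ _ ⟨b, rfl⟩
  exact (h a b).symm.eq

theorem map_inl_commutatorElement_eq_one {G₁ G₂ G₃ : Type*} [Group G₁] [Group G₂] [Group G₃]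
    (φ : G₁ × G₂ × G₃ →* Perm X)
    [IsPretransitive (φ.comp ((MonoidHom.inr G₁ _).comp (MonoidHom.inl G₂ G₃))).range X]
    [IsPretransitive (φ.comp ((MonoidHom.inr G₁ _).comp (MonoidHom.inr G₂ G₃))).range X]
    (a b : G₁) : φ (MonoidHom.inl G₁ _ ⁅a, b⁆) = 1 := by
  rw [map_commutatorElement, map_commutatorElement, commutatorElement_eq_one_iff_commute]
  refine commute_of_le_centralizer_of_isPretransitive (A := (φ.comp (MonoidHom.inl G₁ _)).range)
    (B := (φ.comp ((MonoidHom.inr G₁ _).comp (MonoidHom.inl G₂ G₃))).range)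
    (C := (φ.comp ((MonoidHom.inr G₁ _).comp (MonoidHom.inr G₂ G₃))).range) ?_ ?_ ?_
    ⟨a, rfl⟩ ⟨b, rfl⟩ <;>
    refine MonoidHom.range_le_centralizer_range _ _ fun x y => Commute.map ?_ φ
  · exact (MonoidHom.commute_inl_inr y x).symm.map (MonoidHom.inr G₁ _)
  · exact MonoidHom.commute_inl_inr x _
  · exact MonoidHom.commute_inl_inr x _

end Centralizer

/-- `F₂ × F₂ × F₂` is not purely permutation field: there is no sequence of
homomorphisms to symmetric groups whose standard representations strongly converge to the left
regular representation. -/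
theorem F2xF2xF2_not_PPermF :
    ¬ ∃ (n : ℕ → ℕ) (φ : ∀ i, F₂ × F₂ × F₂ →* Equiv.Perm (Fin (n i))),
      ∀ z : MonoidAlgebra ℂ (F₂ × F₂ × F₂),
        Tendsto (fun i => ‖stdAlg (n i) (φ i) z‖) atTop
          (nhds ‖leftRegularAlg (F₂ × F₂ × F₂) z‖) := by
  rintro ⟨n, φ, hconv⟩
  have h₂ := eventually_isPretransitive_of_leftInverse φ
    ((MonoidHom.inr F₂ _).comp (MonoidHom.inl F₂ F₂))
    ((MonoidHom.fst F₂ F₂).comp (MonoidHom.snd F₂ _)) (fun _ => rfl) hconv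
  have h₃ := eventually_isPretransitive_of_leftInverse φ
    ((MonoidHom.inr F₂ _).comp (MonoidHom.inr F₂ F₂))
    ((MonoidHom.snd F₂ F₂).comp (MonoidHom.snd F₂ _)) (fun _ => rfl) hconv
  set c : F₂ × F₂ × F₂ := MonoidHom.inl F₂ _ ⁅(FreeGroup.of 0 : F₂), FreeGroup.of 1⁆
  have hc : c ≠ 1 := by
    simp only [c, ne_eq, MonoidHom.inl_apply, Prod.mk_eq_one, and_true]
    decide
  have hstd : ∀ᶠ i in atTop, stdAlg (n i) (φ i) (1 - MonoidAlgebra.of ℂ _ c) = 0 :=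
    (h₂.and h₃).mono fun i ⟨_, _⟩ =>
      stdAlg_one_sub_of_eq_one _ (map_inl_commutatorElement_eq_one (φ i) _ _)
  exact leftRegularAlg_one_sub_of_ne_zero hc <| norm_eq_zero.1 <|
    tendsto_nhds_unique_of_eventuallyEq (hconv _) tendsto_const_nhds
      (hstd.mono fun _ hi => by simp only [hi]; exact ContinuousLinearMap.opNorm_zero)

end
end

section
/- Suppose π_i is a sequence of unitary representations of a locally compact group G strongly converging to a representation π_∞ (i.e., ‖π_i(f)‖ → ‖π_∞(f)‖ for all f ∈ C_c(G)). If K is a compact subset of the unitary dual disjoint from the support of π_∞, then there exists i₀ such that for all i > i₀, no element of K is weakly contained in π_i. -/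
noncomputable section
open Filter

/-- A strongly continuous unitary representation of `G` on a complex Hilbert space. -/
structure UnitaryRep (G : Type) [Group G] [TopologicalSpace G] where
  carrier : Type
  [nacg : NormedAddCommGroup carrier]
  [ips : InnerProductSpace ℂ carrier]
  [complete : CompleteSpace carrier]
  ρ : G →* (carrier →L[ℂ] carrier)
  unitary' : ∀ g, ρ g ∈ unitary (carrier →L[ℂ] carrier)
  continuous' : Continuous fun p : G × carrier => ρ p.1 p.2

attribute [instance] UnitaryRep.nacg UnitaryRep.ips UnitaryRep.complete

variable {G : Type} [Group G] [TopologicalSpace G] [MeasurableSpace G]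

/-- The smoothed operator `π(f) = ∫ f(g) π(g) dμ(g)`. -/
def UnitaryRep.op (π : UnitaryRep G) (μ : MeasureTheory.Measure G) (f : G → ℂ) :
    π.carrier →L[ℂ] π.carrier :=
  ∫ g, f g • π.ρ g  ∂μ

/-- Weak containment `π ≺ σ`, characterized by `‖π(f)‖ ≤ ‖σ(f)‖` for all `f ∈ C_c(G)`. -/
def WeaklyContained (μ : MeasureTheory.Measure G) (π σ : UnitaryRep G) : Prop :=
  ∀ f : G → ℂ, Continuous f → HasCompactSupport f → ‖π.op μ f‖ ≤ ‖σ.op μ f‖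

/-- Irreducibility: the only closed invariant subspaces are `⊥` and `⊤`. -/
def UnitaryRep.Irreducible (π : UnitaryRep G) : Prop :=
  ∀ K : Submodule ℂ π.carrier, IsClosed (K : Set π.carrier) →
    (∀ g, ∀ v ∈ K, π.ρ g v ∈ K) → K = ⊥ ∨ K = ⊤

/-- A basic Fell neighbourhood of `π`: representations `π'` having a vector `ξ'` whose diagonal
matrix coefficient is uniformly `ε`-close on the compact set `F` to that of the vector `ξ`. -/
def fellBasicSet (π : UnitaryRep G) (ξ : π.carrier) (F : Set G) (ε : ℝ) :
    Set (UnitaryRep G) :=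
  {π' | ∃ ξ' : π'.carrier, ∀ g ∈ F,
    ‖(inner (𝕜 := ℂ) (π'.ρ g ξ') ξ') - (inner (𝕜 := ℂ) (π.ρ g ξ) ξ)‖ < ε}

/-- The Fell topology on unitary representations of `G`, generated by the basic
neighbourhoods of diagonal matrix coefficients on compact sets. -/
def fellTopology (G : Type) [Group G] [TopologicalSpace G] :
    TopologicalSpace (UnitaryRep G) :=
  TopologicalSpace.generateFrom
    {S | ∃ (π : UnitaryRep G) (ξ : π.carrier) (F : Set G) (ε : ℝ),
      IsCompact F ∧ 0 < ε ∧ S = fellBasicSet π ξ F ε}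

/-!
For `σ ∈ K` pick `f ∈ C_c(G)` and `c` with `‖π_∞(f)‖ < c < ‖σ(f)‖`. Expanding
`‖σ'(f)ξ'‖² = ∫∫ f(s) conj (f t) ⟪σ'(s⁻¹t)ξ', ξ'⟫ dt ds` shows that `σ' ↦ ‖σ'(f)‖` is lower
semicontinuous for the Fell topology, since only the matrix coefficient on the compact set
`(supp f)⁻¹ (supp f)` enters. So `‖σ'(f)‖ > c` on a Fell neighbourhood of `σ`, whereas
`‖π_i(f)‖ < c` for large `i` by strong convergence, and `‖σ'(f)‖ ≤ ‖π_i(f)‖` would follow from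
`σ' ≺ π_i`. Compactness of `K` makes the threshold on `i` uniform.

The operator `σ(f)` is a Bochner integral in operator norm, hence `0` unless `g ↦ f g • σ g` is
integrable. If `σ(f₀) ≠ 0` for some continuous `f₀`, then `g ↦ σ g` is a.e. strongly measurable
on the open set `{f₀ ≠ 0}`, hence, by left invariance of `μ`, on a neighbourhood of every compact
set, and so `σ(f)` is a genuine integral for every `f ∈ C_c(G)`. This applies to every element of
`K`, since none is weakly contained in `π_∞`.
-/

set_option linter.unusedSectionVars false

open MeasureTheory Function Set
open scoped Pointwise InnerProductSpace ComplexConjugate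

theorem norm_integral_mul_sub_integral_mul_le {α 𝕜 : Type*} [MeasurableSpace α] {μ : Measure α}
    [RCLike 𝕜] {f a b : α → 𝕜} {ε : ℝ} (hf : Integrable f μ)
    (ha : Integrable (fun x => f x * a x) μ) (hb : Integrable (fun x => f x * b x) μ)
    (hab : ∀ x, f x ≠ 0 → ‖a x - b x‖ ≤ ε) :
    ‖∫ x, f x * a x ∂μ - ∫ x, f x * b x ∂μ‖ ≤ (∫ x, ‖f x‖ ∂μ) * ε := by
  rw [← integral_sub ha hb, ← integral_mul_const]
  refine norm_integral_le_of_norm_le (hf.norm.mul_const ε) (ae_of_all _ fun x => ?_)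
  rw [← mul_sub, norm_mul]
  by_cases hx : f x = 0
  · simp [hx]
  · exact mul_le_mul_of_nonneg_left (hab x hx) (norm_nonneg _)

theorem abs_norm_sq_sub_norm_sq_le {𝕜 E F : Type*} [RCLike 𝕜] [NormedAddCommGroup E]
    [InnerProductSpace 𝕜 E] [NormedAddCommGroup F] [InnerProductSpace 𝕜 F] (x : E) (y : F) :
    |‖x‖ ^ 2 - ‖y‖ ^ 2| ≤ ‖⟪x, x⟫_𝕜 - ⟪y, y⟫_𝕜‖ := by
  rw [← inner_self_eq_norm_sq (𝕜 := 𝕜), ← inner_self_eq_norm_sq (𝕜 := 𝕜), ← map_sub]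
  exact RCLike.abs_re_le_norm _

theorem MeasureTheory.AEStronglyMeasurable.restrict_support_of_smul {α E : Type*}
    [MeasurableSpace α] {μ : Measure α} [NormedAddCommGroup E] [NormedSpace ℂ E]
    {c : α → ℂ} {F : α → E} (hc : Measurable c) (h : AEStronglyMeasurable (fun x => c x • F x) μ) :
    AEStronglyMeasurable F (μ.restrict (support c)) := by
  refine (hc.inv.aestronglyMeasurable.smul h.restrict).congr ?_
  refine ae_restrict_of_forall_mem (hc (measurableSet_singleton 0).compl) fun x hx => ?_
  simp [smul_smul, inv_mul_cancel₀ hx]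

theorem MeasureTheory.AEStronglyMeasurable.smul_of_support_subset {α E : Type*}
    [MeasurableSpace α] {μ : Measure α} [NormedAddCommGroup E] [NormedSpace ℂ E]
    {f : α → ℂ} {F : α → E} {U : Set α} (hU : MeasurableSet U) (hfU : support f ⊆ U)
    (hf : AEStronglyMeasurable f μ) (hF : AEStronglyMeasurable F (μ.restrict U)) :
    AEStronglyMeasurable (fun x => f x • F x) μ := by
  rw [← Measure.restrict_univ (μ := μ), ← union_compl_self U, aestronglyMeasurable_union_iff]
  refine ⟨hf.restrict.smul hF, (aestronglyMeasurable_const (b := 0)).congr ?_⟩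
  refine ae_restrict_of_forall_mem hU.compl fun x hx => ?_
  simp [notMem_support.1 fun h => hx (hfU h)]

namespace MonoidHom

variable {H A : Type*} [Group H] [MeasurableSpace H] [Monoid A] [TopologicalSpace A]
  {μ : Measure H} (φ : H →* A)

theorem aestronglyMeasurable_restrict_preimage_mul_left [ContinuousMul A] [MeasurableMul H]
    [μ.IsMulLeftInvariant] {V : Set H} (hV : MeasurableSet V)
    (hφ : AEStronglyMeasurable φ (μ.restrict V)) (g : H) :
    AEStronglyMeasurable φ (μ.restrict ((g * ·) ⁻¹' V)) := by
  have hmap : (μ.restrict ((g * ·) ⁻¹' V)).map (g * ·) = μ.restrict V := by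
    rw [← Measure.restrict_map (measurable_const_mul g) hV, map_mul_left_eq_self]
  rw [← hmap] at hφ
  refine ((continuous_const_mul (φ g⁻¹)).comp_aestronglyMeasurable
    (hφ.comp_measurable (measurable_const_mul g))).congr (ae_of_all _ fun x => ?_)
  simp [← map_mul]

theorem exists_isOpen_superset_aestronglyMeasurable_restrict [TopologicalSpace H]
    [ContinuousMul A] [ContinuousMul H] [OpensMeasurableSpace H] [MeasurableMul H]
    [μ.IsMulLeftInvariant] [TopologicalSpace.PseudoMetrizableSpace A]
    {V : Set H} (hV : IsOpen V) (hVne : V.Nonempty) (hφ : AEStronglyMeasurable φ (μ.restrict V))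
    {S : Set H} (hS : IsCompact S) :
    ∃ U, IsOpen U ∧ S ⊆ U ∧ AEStronglyMeasurable φ (μ.restrict U) := by
  obtain ⟨v, hv⟩ := hVne
  have hcover : S ⊆ ⋃ g : H, (g * ·) ⁻¹' V := fun s _ =>
    mem_iUnion.2 ⟨v * s⁻¹, by simpa using hv⟩
  have hopen (g : H) : IsOpen ((g * ·) ⁻¹' V) := hV.preimage (continuous_const_mul g)
  obtain ⟨T, hT⟩ := hS.elim_finite_subcover _ hopen hcover
  refine ⟨⋃ g : T, (g * ·) ⁻¹' V, isOpen_iUnion fun g => hopen g,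
    by simpa [iUnion_subtype] using hT, aestronglyMeasurable_iUnion_iff.2 fun g => ?_⟩
  exact φ.aestronglyMeasurable_restrict_preimage_mul_left hV.measurableSet hφ g

end MonoidHom

theorem fellBasicSet_mem_nhds (σ : UnitaryRep G) (ξ : σ.carrier) {F : Set G} {ε : ℝ}
    (hF : IsCompact F) (hε : 0 < ε) : fellBasicSet σ ξ F ε ∈ @nhds _ (fellTopology G) σ :=
  @IsOpen.mem_nhds _ (fellTopology G) _ _
    (TopologicalSpace.isOpen_generateFrom_of_mem ⟨σ, ξ, F, ε, hF, hε, rfl⟩)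
    ⟨ξ, fun _ _ => by simpa using hε⟩

namespace UnitaryRep

variable (τ : UnitaryRep G) {μ : Measure G}

def matrixCoeff (ξ : τ.carrier) (g : G) : ℂ :=
  ⟪τ.ρ g ξ, ξ⟫_ℂ

theorem continuous_ρ_apply (ξ : τ.carrier) : Continuous fun g => τ.ρ g ξ :=
  τ.continuous'.comp (continuous_id.prodMk continuous_const)

theorem continuous_matrixCoeff (ξ : τ.carrier) : Continuous (τ.matrixCoeff ξ) :=
  (τ.continuous_ρ_apply ξ).inner continuous_const

theorem inner_ρ_ρ (ξ : τ.carrier) (s t : G) : ⟪τ.ρ t ξ, τ.ρ s ξ⟫_ℂ = τ.matrixCoeff ξ (s⁻¹ * t) := by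
  have : τ.ρ t = τ.ρ s * τ.ρ (s⁻¹ * t) := by rw [← map_mul, mul_inv_cancel_left]
  rw [this, mul_apply_eq_comp,
    ContinuousLinearMap.inner_map_map_of_mem_unitary (τ.unitary' s), matrixCoeff]

theorem norm_ρ_le (g : G) : ‖τ.ρ g‖ ≤ 1 :=
  ContinuousLinearMap.opNorm_le_bound _ zero_le_one fun x => by
    rw [ContinuousLinearMap.norm_map_of_mem_unitary (τ.unitary' g), one_mul]

theorem integrable_of_op_ne_zero {f : G → ℂ} (h : τ.op μ f ≠ 0) :
    Integrable (fun g => f g • τ.ρ g) μ := by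
  contrapose! h
  exact integral_undef h

theorem integrable_of_hasCompactSupport_of_op_ne_zero [ContinuousMul G] [BorelSpace G]
    [μ.IsMulLeftInvariant] [IsFiniteMeasureOnCompacts μ] {f₀ : G → ℂ} (hf₀ : Continuous f₀)
    (h : τ.op μ f₀ ≠ 0) {f : G → ℂ} (hf : Continuous f) (hfs : HasCompactSupport f) :
    Integrable (fun g => f g • τ.ρ g) μ := by
  have hne : (support f₀).Nonempty := by
    contrapose! h
    simp [op, support_eq_empty_iff.1 h]
  obtain ⟨U, hU, hfU, hρU⟩ := τ.ρ.exists_isOpen_superset_aestronglyMeasurable_restrict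
    hf₀.isOpen_support hne
    ((τ.integrable_of_op_ne_zero h).aestronglyMeasurable.restrict_support_of_smul
      hf₀.measurable) hfs
  refine (hf.norm.integrable_of_hasCompactSupport hfs.norm).mono'
    (AEStronglyMeasurable.smul_of_support_subset hU.measurableSet
      ((subset_tsupport f).trans hfU) hf.aestronglyMeasurable hρU) (ae_of_all _ fun g => ?_)
  simpa [norm_smul] using mul_le_mul_of_nonneg_left (τ.norm_ρ_le g) (norm_nonneg (f g))

theorem integrable_of_not_weaklyContained [ContinuousMul G] [BorelSpace G]
    [μ.IsMulLeftInvariant] [IsFiniteMeasureOnCompacts μ] {σ : UnitaryRep G}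
    (h : ¬ WeaklyContained μ τ σ) {f : G → ℂ} (hf : Continuous f) (hfs : HasCompactSupport f) :
    Integrable (fun g => f g • τ.ρ g) μ := by
  obtain ⟨f₀, hf₀, -, hlt⟩ : ∃ f₀ : G → ℂ, Continuous f₀ ∧ HasCompactSupport f₀ ∧
      ‖σ.op μ f₀‖ < ‖τ.op μ f₀‖ := by
    simpa [WeaklyContained] using h
  exact τ.integrable_of_hasCompactSupport_of_op_ne_zero hf₀
    (norm_pos_iff.1 ((norm_nonneg _).trans_lt hlt)) hf hfs

variable {τ} {f : G → ℂ}

theorem op_apply (hf : Integrable (fun g => f g • τ.ρ g) μ) (ξ : τ.carrier) :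
    τ.op μ f ξ = ∫ g, f g • τ.ρ g ξ ∂μ := by
  rw [op, ContinuousLinearMap.integral_apply hf]
  rfl

theorem inner_op_apply_right (hf : Integrable (fun g => f g • τ.ρ g) μ) (ξ η : τ.carrier) :
    ⟪η, τ.op μ f ξ⟫_ℂ = ∫ g, f g * ⟪η, τ.ρ g ξ⟫_ℂ ∂μ := by
  have hξ : Integrable (fun g => f g • τ.ρ g ξ) μ := hf.apply_continuousLinearMap ξ
  rw [op_apply hf, ← integral_inner hξ]
  simp only [inner_smul_right]

theorem inner_op_apply_left (hf : Integrable (fun g => f g • τ.ρ g) μ) (ξ η : τ.carrier) :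
    ⟪τ.op μ f ξ, η⟫_ℂ = ∫ g, conj (f g) * ⟪τ.ρ g ξ, η⟫_ℂ ∂μ := by
  rw [← inner_conj_symm, inner_op_apply_right hf, ← integral_conj]
  simp only [map_mul, inner_conj_symm]

theorem abs_norm_sq_op_apply_sub_le [IsTopologicalGroup G] [OpensMeasurableSpace G]
    [IsFiniteMeasureOnCompacts μ] {σ σ' : UnitaryRep G} (hfc : Continuous f)
    (hfs : HasCompactSupport f) (hσ : Integrable (fun g => f g • σ.ρ g) μ)
    (hσ' : Integrable (fun g => f g • σ'.ρ g) μ) (ξ : σ.carrier) (ξ' : σ'.carrier) {ε : ℝ}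
    (hε : ∀ g ∈ (tsupport f)⁻¹ * tsupport f, ‖σ'.matrixCoeff ξ' g - σ.matrixCoeff ξ g‖ ≤ ε) :
    |‖σ'.op μ f ξ'‖ ^ 2 - ‖σ.op μ f ξ‖ ^ 2| ≤ (∫ g, ‖f g‖ ∂μ) * ((∫ g, ‖f g‖ ∂μ) * ε) := by
  have hint : ∀ {a b : G → ℂ}, Continuous a → HasCompactSupport a → Continuous b →
      Integrable (fun x => a x * b x) μ := fun ha has hb =>
    (ha.mul hb).integrable_of_hasCompactSupport has.mul_right
  have hfc' : Continuous fun t => conj (f t) := Complex.continuous_conj.comp hfc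
  have hfs' : HasCompactSupport fun t => conj (f t) := hfs.comp_left (map_zero _)
  refine (abs_norm_sq_sub_norm_sq_le (𝕜 := ℂ) _ _).trans ?_
  rw [inner_op_apply_right hσ', inner_op_apply_right hσ]
  refine norm_integral_mul_sub_integral_mul_le (hfc.integrable_of_hasCompactSupport hfs)
    (hint hfc hfs (continuous_const.inner (σ'.continuous_ρ_apply ξ')))
    (hint hfc hfs (continuous_const.inner (σ.continuous_ρ_apply ξ))) fun s hs => ?_
  rw [inner_op_apply_left hσ', inner_op_apply_left hσ]
  simp only [inner_ρ_ρ]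
  calc _ ≤ (∫ t, ‖conj (f t)‖ ∂μ) * ε :=
        norm_integral_mul_sub_integral_mul_le (hfc'.integrable_of_hasCompactSupport hfs')
          (hint hfc' hfs' ((σ'.continuous_matrixCoeff ξ').comp (continuous_const_mul s⁻¹)))
          (hint hfc' hfs' ((σ.continuous_matrixCoeff ξ).comp (continuous_const_mul s⁻¹)))
          fun t ht => hε _ (mul_mem_mul (inv_mem_inv.2 (subset_tsupport f hs))
            (subset_tsupport f (by simpa using ht)))
    _ = (∫ t, ‖f t‖ ∂μ) * ε := by simp only [RCLike.norm_conj]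

theorem eventually_lt_norm_op [IsTopologicalGroup G] [OpensMeasurableSpace G]
    [IsFiniteMeasureOnCompacts μ] (σ : UnitaryRep G) (hfc : Continuous f)
    (hfs : HasCompactSupport f) {c : ℝ} (hc₀ : 0 ≤ c) (hc : c < ‖σ.op μ f‖) :
    ∀ᶠ σ' in @nhds _ (fellTopology G) σ,
      Integrable (fun g => f g • σ'.ρ g) μ → c < ‖σ'.op μ f‖ := by
  have hσ := σ.integrable_of_op_ne_zero (norm_pos_iff.1 (hc₀.trans_lt hc))
  obtain ⟨ξ, hξ, hcξ⟩ := (σ.op μ f).exists_lt_apply_of_lt_opNorm hc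
  set M := ∫ g, ‖f g‖ ∂μ
  -- `ε` is chosen so that `‖σ(f)ξ‖² - M²ε > c²(1 + ε)`.
  obtain ⟨ε, hε, hεδ⟩ := exists_pos_mul_lt
    (sub_pos.2 (pow_lt_pow_left₀ hcξ hc₀ two_ne_zero)) (M * M + c ^ 2)
  have hF : IsCompact (insert 1 ((tsupport f)⁻¹ * tsupport f)) := (hfs.inv.mul hfs).insert 1
  filter_upwards [fellBasicSet_mem_nhds σ ξ hF hε] with σ' ⟨ξ', hξ'⟩ hσ'
  have hclose : ∀ g ∈ insert 1 ((tsupport f)⁻¹ * tsupport f),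
      ‖σ'.matrixCoeff ξ' g - σ.matrixCoeff ξ g‖ ≤ ε := fun g hg => (hξ' g hg).le
  have hξ'sq : ‖ξ'‖ ^ 2 ≤ 1 + ε := by
    have h₁ := hclose 1 (mem_insert _ _)
    rw [matrixCoeff, matrixCoeff, map_one, map_one, one_apply_eq_self, one_apply_eq_self] at h₁
    have h₂ := abs_le.1 ((abs_norm_sq_sub_norm_sq_le (𝕜 := ℂ) ξ' ξ).trans h₁)
    nlinarith [norm_nonneg ξ]
  have hop := abs_le.1 (abs_norm_sq_op_apply_sub_le hfc hfs hσ hσ' ξ ξ'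
    fun g hg => hclose g (mem_insert_of_mem _ hg))
  have hle : ‖σ'.op μ f ξ'‖ ≤ ‖σ'.op μ f‖ * ‖ξ'‖ := (σ'.op μ f).le_opNorm ξ'
  have hsq : c ^ 2 * ‖ξ'‖ ^ 2 < ‖σ'.op μ f‖ ^ 2 * ‖ξ'‖ ^ 2 := by
    nlinarith [norm_nonneg (σ'.op μ f ξ'), sq_nonneg c]
  exact lt_of_pow_lt_pow_left₀ 2 (norm_nonneg _) (lt_of_mul_lt_mul_right hsq (sq_nonneg _))

end UnitaryRep

theorem eventually_not_weakly_contained_of_strong_convergence_general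
    [IsTopologicalGroup G] [BorelSpace G]
    (μ : MeasureTheory.Measure G) [μ.IsHaarMeasure]
    (π : ℕ → UnitaryRep G) (πinf : UnitaryRep G)
    (hstrong : ∀ f : G → ℂ, Continuous f → HasCompactSupport f →
      Tendsto (fun i => ‖(π i).op μ f‖) atTop (nhds ‖πinf.op μ f‖))
    (K : Set (UnitaryRep G))
    (hKcpt : @IsCompact _ (fellTopology G) K)
    (hKdisj : ∀ σ ∈ K, ¬ WeaklyContained μ σ πinf) :
    ∃ i₀ : ℕ, ∀ i > i₀, ∀ σ ∈ K, ¬ WeaklyContained μ σ (π i) := by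
  let _ : TopologicalSpace (UnitaryRep G) := fellTopology G
  suffices h : ∀ᶠ i in atTop, ∀ σ ∈ K, ¬ WeaklyContained μ σ (π i) by
    obtain ⟨i₀, hi₀⟩ := eventually_atTop.1 h
    exact ⟨i₀, fun i hi => hi₀ i hi.le⟩
  refine (Eventually.curry (hKcpt.mem_prod_nhdsSet_of_forall
    (s := {p | p.2 ∈ K → ¬ WeaklyContained μ p.2 (π p.1)}) fun σ hσ => ?_)).mono
    fun i hi σ hσ => hi.self_of_nhdsSet σ hσ hσ
  obtain ⟨f, hfc, hfs, hlt⟩ : ∃ f : G → ℂ, Continuous f ∧ HasCompactSupport f ∧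
      ‖πinf.op μ f‖ < ‖σ.op μ f‖ := by
    simpa [WeaklyContained] using hKdisj σ hσ
  obtain ⟨c, hc_inf, hc_σ⟩ := exists_between hlt
  filter_upwards [((hstrong f hfc hfs).eventually_lt_const hc_inf).prod_mk
    (σ.eventually_lt_norm_op hfc hfs ((norm_nonneg _).trans hc_inf.le) hc_σ)]
  rintro ⟨i, σ'⟩ ⟨hi, hσ'⟩ hσ'K hwc
  exact (hwc f hfc hfs).not_gt
    (hi.trans (hσ' (σ'.integrable_of_not_weaklyContained (hKdisj σ' hσ'K) hfc hfs)))

/-- if `π_i` strongly converge to `π_∞` and `K` is a Fell-compact set of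
irreducible representations none of which is weakly contained in `π_∞` (i.e. `K` is a compact
subset of the unitary dual disjoint from the support of `π_∞`), then eventually no element
of `K` is weakly contained in `π_i`. -/
theorem eventually_not_weakly_contained_of_strong_convergence
    [IsTopologicalGroup G] [LocallyCompactSpace G] [BorelSpace G]
    (μ : MeasureTheory.Measure G) [μ.IsHaarMeasure]
    (π : ℕ → UnitaryRep G) (πinf : UnitaryRep G)
    (hstrong : ∀ f : G → ℂ, Continuous f → HasCompactSupport f →
      Tendsto (fun i => ‖(π i).op μ f‖) atTop (nhds ‖πinf.op μ f‖))
    (K : Set (UnitaryRep G))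
    (hKcpt : @IsCompact _ (fellTopology G) K)
    (hKirr : ∀ σ ∈ K, σ.Irreducible)
    (hKdisj : ∀ σ ∈ K, ¬ WeaklyContained μ σ πinf) :
    ∃ i₀ : ℕ, ∀ i > i₀, ∀ σ ∈ K, ¬ WeaklyContained μ σ (π i) :=
  eventually_not_weakly_contained_of_strong_convergence_general μ π πinf hstrong K hKcpt hKdisj

end
end
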